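/- arXiv:math/0512211 — 4 statements merged into one kernel-verified Lean document; each statement's English description precedes it below -/
import Mathlib

section
/- Let V be a real vector space, Q the quadratic form Q(v,ξ) = ξ(v) on V × V*, and CL(V ⊕ V*) the Clifford algebra of Q with canonical map ι : V × V* → CL(V ⊕ V*). For α, β ∈ V*, the element g = 1 + ι(0,α)·ι(0,β) is invertible with inverse 1 − ι(0,α)·ι(0,β), and for every v ∈ V and ξ ∈ V* one has g⁻¹ · ι(v,ξ) · g = ι(v, ξ + α(v)β − β(v)α). In particular conjugation by g preserves the image of ι and acts on V ⊕ V* as the b-field transform v + ξ ↦ v + ξ + i_v(α ∧ β) determined by the 2-form b = α ∧ β. -/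
/-- in the Clifford algebra of the quadratic form `Q(v,ξ) = ξ(v)` on `V × V*`,
for 1-forms `α, β` the element `g = 1 + ι(0,α)ι(0,β)` is invertible with inverse
`1 − ι(0,α)ι(0,β)`, and conjugation by `g` acts on `V ⊕ V*` as the b-field transform
`v + ξ ↦ v + ξ + α(v)β − β(v)α` determined by the 2-form `b = α ∧ β`. -/
theorem bfield_transform (V : Type*) [AddCommGroup V] [Module ℝ V]
    (Q : QuadraticForm ℝ (V × Module.Dual ℝ V))
    (hQ : ∀ p : V × Module.Dual ℝ V, Q p = p.2 p.1)
    (α β : Module.Dual ℝ V) :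
    (1 + CliffordAlgebra.ι Q ((0 : V), α) * CliffordAlgebra.ι Q ((0 : V), β)) *
        (1 - CliffordAlgebra.ι Q ((0 : V), α) * CliffordAlgebra.ι Q ((0 : V), β)) = 1 ∧
    (1 - CliffordAlgebra.ι Q ((0 : V), α) * CliffordAlgebra.ι Q ((0 : V), β)) *
        (1 + CliffordAlgebra.ι Q ((0 : V), α) * CliffordAlgebra.ι Q ((0 : V), β)) = 1 ∧
    ∀ (v : V) (ξ : Module.Dual ℝ V),
      (1 - CliffordAlgebra.ι Q ((0 : V), α) * CliffordAlgebra.ι Q ((0 : V), β)) *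
          CliffordAlgebra.ι Q (v, ξ) *
          (1 + CliffordAlgebra.ι Q ((0 : V), α) * CliffordAlgebra.ι Q ((0 : V), β)) =
        CliffordAlgebra.ι Q (v, ξ + α v • β - β v • α) := by
  set a := CliffordAlgebra.ι Q ((0 : V), α) with ha_def
  set b := CliffordAlgebra.ι Q ((0 : V), β) with hb_def
  have ha : a * a = 0 := by
    rw [ha_def, CliffordAlgebra.ι_sq_scalar, hQ]; simp
  have hb : b * b = 0 := by
    rw [hb_def, CliffordAlgebra.ι_sq_scalar, hQ]; simp
  have hab : a * b = - (b * a) := by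
    have h := CliffordAlgebra.ι_mul_ι_add_swap ((0 : V), α) ((0 : V), β) (Q := Q)
    have hp : QuadraticMap.polar Q ((0 : V), α) ((0 : V), β) = 0 := by
      simp [QuadraticMap.polar, hQ]
    rw [hp] at h
    simp at h
    rw [← ha_def, ← hb_def] at h
    exact eq_neg_of_add_eq_zero_left h
  have hba : b * a = -(a * b) := by rw [hab, neg_neg]
  -- (ab)^2 = 0
  have habab : a * b * (a * b) = 0 := by
    calc a * b * (a * b) = a * (b * a) * b := by noncomm_ring
    _ = a * (-(a*b)) * b := by rw [hba]
    _ = -(a * a * (b * b)) := by noncomm_ring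
    _ = 0 := by rw [ha]; simp
  refine ⟨by rw [mul_one_sub, one_add_mul, habab]; abel, by rw [mul_one_add, one_sub_mul, habab]; abel, ?_⟩
  intro v ξ
  set x := CliffordAlgebra.ι Q (v, ξ) with hx_def
  have hxa : x * a + a * x = algebraMap ℝ _ (α v) := by
    have h := CliffordAlgebra.ι_mul_ι_add_swap (v, ξ) ((0 : V), α) (Q := Q)
    have hp : QuadraticMap.polar Q (v, ξ) ((0 : V), α) = α v := by
      simp [QuadraticMap.polar, hQ]
    rwa [hp, ← hx_def, ← ha_def] at h
  have hxb : x * b + b * x = algebraMap ℝ _ (β v) := by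
    have h := CliffordAlgebra.ι_mul_ι_add_swap (v, ξ) ((0 : V), β) (Q := Q)
    have hp : QuadraticMap.polar Q (v, ξ) ((0 : V), β) = β v := by
      simp [QuadraticMap.polar, hQ]
    rwa [hp, ← hx_def, ← hb_def] at h
  have hxa' : x * a = algebraMap ℝ _ (α v) - a * x := by rw [← hxa]; abel
  have hxb' : x * b = algebraMap ℝ _ (β v) - b * x := by rw [← hxb]; abel
  -- key: x * (a*b) = (α v) • b - (β v) • a + a*b*x
  have hxab : x * (a * b) = (α v) • b - (β v) • a + a * b * x := by
    calc x * (a * b) = (x * a) * b := by noncomm_ring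
    _ = (algebraMap ℝ _ (α v) - a * x) * b := by rw [hxa']
    _ = algebraMap ℝ _ (α v) * b - a * (x * b) := by noncomm_ring
    _ = algebraMap ℝ _ (α v) * b - a * (algebraMap ℝ _ (β v) - b * x) := by rw [hxb']
    _ = algebraMap ℝ _ (α v) * b - a * algebraMap ℝ _ (β v) + a * b * x := by noncomm_ring
    _ = (α v) • b - (β v) • a + a * b * x := by
        rw [← Algebra.commutes (β v) a, Algebra.smul_def, Algebra.smul_def]
  have habxab : a * b * x * (a * b) = 0 := by
    calc a * b * x * (a * b) = a * b * (x * (a * b)) := by noncomm_ring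
    _ = a * b * ((α v) • b - (β v) • a + a * b * x) := by rw [hxab]
    _ = (α v) • (a * (b * b)) - (β v) • (a * (b * a)) + (a * b * (a * b)) * x := by
        rw [mul_add, mul_sub, mul_smul_comm, mul_smul_comm]; noncomm_ring
    _ = 0 := by
        rw [hb, habab, hba]
        simp only [mul_zero, smul_zero, mul_neg, smul_neg, zero_mul, ← mul_assoc, ha, zero_mul,
          smul_zero, neg_zero]
        abel
  have lhs_eq : (1 - a * b) * x * (1 + a * b) = x + (α v) • b - (β v) • a := by
    have expand : (1 - a * b) * x * (1 + a * b)
        = x + x * (a * b) - a * b * x - a * b * x * (a * b) := by noncomm_ring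
    rw [expand, hxab, habxab]
    abel
  rw [lhs_eq]
  have : ((v, ξ + α v • β - β v • α) : V × Module.Dual ℝ V)
      = (v, ξ) + (α v) • ((0 : V), β) - (β v) • ((0 : V), α) := by
    simp [Prod.ext_iff]
  rw [this, map_sub, map_add, map_smul, map_smul]
end

section
/- Let V be a real vector space, Q the quadratic form Q(v,ξ) = ξ(v) on V × V*, and CL(V ⊕ V*) the Clifford algebra of Q with canonical map ι : V × V* → CL(V ⊕ V*). For v, w ∈ V, the element h = 1 + ι(v,0)·ι(w,0) is invertible with inverse 1 − ι(v,0)·ι(w,0), and for every u ∈ V and ξ ∈ V* one has h⁻¹ · ι(u,ξ) · h = ι(u + ξ(v)w − ξ(w)v, ξ). In particular conjugation by h preserves the image of ι and acts on V ⊕ V* as the β-field transform determined by the 2-vector β = v ∧ w. -/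
/-- in the Clifford algebra of the quadratic form `Q(v,ξ) = ξ(v)` on `V × V*`,
for vectors `v, w` the element `h = 1 + ι(v,0)ι(w,0)` is invertible with inverse
`1 − ι(v,0)ι(w,0)`, and conjugation by `h` acts on `V ⊕ V*` as the β-field transform
`u + ξ ↦ u + ξ(v)w − ξ(w)v + ξ` determined by the 2-vector `β = v ∧ w`. -/
theorem betafield_transform (V : Type*) [AddCommGroup V] [Module ℝ V]
    (Q : QuadraticForm ℝ (V × Module.Dual ℝ V))
    (hQ : ∀ p : V × Module.Dual ℝ V, Q p = p.2 p.1)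
    (v w : V) :
    (1 + CliffordAlgebra.ι Q (v, (0 : Module.Dual ℝ V)) *
          CliffordAlgebra.ι Q (w, (0 : Module.Dual ℝ V))) *
        (1 - CliffordAlgebra.ι Q (v, (0 : Module.Dual ℝ V)) *
          CliffordAlgebra.ι Q (w, (0 : Module.Dual ℝ V))) = 1 ∧
    (1 - CliffordAlgebra.ι Q (v, (0 : Module.Dual ℝ V)) *
          CliffordAlgebra.ι Q (w, (0 : Module.Dual ℝ V))) *
        (1 + CliffordAlgebra.ι Q (v, (0 : Module.Dual ℝ V)) *
          CliffordAlgebra.ι Q (w, (0 : Module.Dual ℝ V))) = 1 ∧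
    ∀ (u : V) (ξ : Module.Dual ℝ V),
      (1 - CliffordAlgebra.ι Q (v, (0 : Module.Dual ℝ V)) *
          CliffordAlgebra.ι Q (w, (0 : Module.Dual ℝ V))) *
          CliffordAlgebra.ι Q (u, ξ) *
          (1 + CliffordAlgebra.ι Q (v, (0 : Module.Dual ℝ V)) *
            CliffordAlgebra.ι Q (w, (0 : Module.Dual ℝ V))) =
        CliffordAlgebra.ι Q (u + ξ v • w - ξ w • v, ξ) := by
  set A := CliffordAlgebra.ι Q (v, (0 : Module.Dual ℝ V)) with hA
  set B := CliffordAlgebra.ι Q (w, (0 : Module.Dual ℝ V)) with hB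
  have hA2 : A * A = 0 := by
    rw [hA, CliffordAlgebra.ι_sq_scalar, hQ]; simp
  have hB2 : B * B = 0 := by
    rw [hB, CliffordAlgebra.ι_sq_scalar, hQ]; simp
  have hBA : B * A = -(A * B) := by
    have := CliffordAlgebra.ι_mul_ι_add_swap (Q := Q) (w, (0 : Module.Dual ℝ V))
      (v, (0 : Module.Dual ℝ V))
    rw [QuadraticMap.polar, hQ, hQ, hQ] at this
    simp at this
    rw [← hA, ← hB] at this
    exact eq_neg_of_add_eq_zero_left this
  -- (AB)² = 0
  have hABAB : A * B * (A * B) = 0 := by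
    calc A * B * (A * B) = A * (B * A) * B := by noncomm_ring
    _ = A * (-(A * B)) * B := by rw [hBA]
    _ = -(A * A * (B * B)) := by noncomm_ring
    _ = 0 := by rw [hA2]; simp
  refine ⟨by rw [mul_one_sub, one_add_mul, hABAB]; abel, ?_, ?_⟩
  · rw [one_sub_mul, mul_one_add, hABAB]; abel
  intro u ξ
  set X := CliffordAlgebra.ι Q (u, ξ) with hX
  have hXA : X * A = algebraMap ℝ _ (ξ v) - A * X := by
    have := CliffordAlgebra.ι_mul_ι_add_swap (Q := Q) (u, ξ) (v, (0 : Module.Dual ℝ V))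
    rw [QuadraticMap.polar, hQ, hQ, hQ] at this
    simp [map_add] at this
    rw [← hA, ← hX] at this
    exact eq_sub_of_add_eq this
  have hXB : X * B = algebraMap ℝ _ (ξ w) - B * X := by
    have := CliffordAlgebra.ι_mul_ι_add_swap (Q := Q) (u, ξ) (w, (0 : Module.Dual ℝ V))
    rw [QuadraticMap.polar, hQ, hQ, hQ] at this
    simp [map_add] at this
    rw [← hB, ← hX] at this
    exact eq_sub_of_add_eq this
  -- smul forms
  have hXA' : ∀ y, X * (A * y) = ξ v • y - A * (X * y) := by
    intro y
    rw [← mul_assoc, hXA, sub_mul, mul_assoc, Algebra.smul_def]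
  have hXB' : ∀ y, X * (B * y) = ξ w • y - B * (X * y) := by
    intro y
    rw [← mul_assoc, hXB, sub_mul, mul_assoc, Algebra.smul_def]
  have hBA' : ∀ y, B * (A * y) = -(A * (B * y)) := by
    intro y; rw [← mul_assoc, hBA, neg_mul, mul_assoc]
  have hA2' : ∀ y, A * (A * y) = 0 := by
    intro y; rw [← mul_assoc, hA2, zero_mul]
  have hB2' : ∀ y, B * (B * y) = 0 := by
    intro y; rw [← mul_assoc, hB2, zero_mul]
  have hXAs : X * A = ξ v • 1 - A * X := by rw [hXA, Algebra.smul_def, mul_one]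
  have hXBs : X * B = ξ w • 1 - B * X := by rw [hXB, Algebra.smul_def, mul_one]
  have hRHS : CliffordAlgebra.ι Q (u + ξ v • w - ξ w • v, ξ) = X + ξ v • B - ξ w • A := by
    have : (u + ξ v • w - ξ w • v, ξ) =
        (u, ξ) + ξ v • (w, (0 : Module.Dual ℝ V)) - ξ w • (v, (0 : Module.Dual ℝ V)) := by
      ext <;> simp
    rw [this, map_sub, map_add, map_smul, map_smul, ← hA, ← hB, ← hX]
  rw [hRHS]
  simp only [mul_sub, sub_mul, mul_add, add_mul, mul_one, one_mul, mul_assoc,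
    hXA', hXB', hBA', hA2', hB2', hXAs, hXBs, hA2, hB2, hBA,
    mul_smul_comm, smul_mul_assoc, smul_sub, smul_add, smul_zero, smul_neg,
    mul_zero, zero_mul, mul_neg, neg_mul, sub_zero, neg_neg, neg_zero, smul_smul]
  abel
end

section
/- Let (V, g) be a finite-dimensional real inner product space and let I, J, K : V → V be linear isometries of g satisfying I∘I = J∘J = K∘K = −id and I∘J = K. Let g̃ : V → V* be the map g̃(u) = g(u,·), let ω̃_A = g̃ ∘ A for A ∈ {I,J,K}, and define endomorphisms of V × V* by 𝒥_A¹(v,ξ) = (−ω̃_A⁻¹ ξ, ω̃_A v) and 𝒥_A⁰(v,ξ) = (A v, −A* ξ), where A* is the dual map. Then 𝒥_I⁰ = 𝒥_J¹ ∘ 𝒥_K¹, 𝒥_J⁰ = 𝒥_K¹ ∘ 𝒥_I¹, 𝒥_K⁰ = 𝒥_I¹ ∘ 𝒥_J¹, and the triple (𝒥_I⁰, 𝒥_J⁰, 𝒥_K⁰) satisfies the quaternion relations (𝒥_I⁰)² = (𝒥_J⁰)² = (𝒥_K⁰)² = 𝒥_I⁰ ∘ 𝒥_J⁰ ∘ 𝒥_K⁰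 = −id. -/
/-- a hyperKähler structure `(g, I, J, K)` on a finite-dimensional real inner
product space `V` (with `g` encoded by the bijective symmetric positive-definite map
`g̃ : V → V*`) yields generalized complex structures `𝒥_A¹(v,ξ) = (−ω̃_A⁻¹ξ, ω̃_A v)`
(from the 2-forms `ω̃_A = g̃ ∘ A`) and `𝒥_A⁰(v,ξ) = (A v, −A*ξ)` (from the complex
structures), which satisfy `𝒥_I⁰ = 𝒥_J¹𝒥_K¹`, `𝒥_J⁰ = 𝒥_K¹𝒥_I¹`, `𝒥_K⁰ = 𝒥_I¹𝒥_J¹`,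
and the quaternion relations `(𝒥_I⁰)² = (𝒥_J⁰)² = (𝒥_K⁰)² = 𝒥_I⁰𝒥_J⁰𝒥_K⁰ = −id`. -/
theorem generalized_hyperKahler_six_structures (V : Type*) [AddCommGroup V] [Module ℝ V]
    [FiniteDimensional ℝ V]
    (g : V ≃ₗ[ℝ] Module.Dual ℝ V)
    (hsymm : ∀ u w : V, g u w = g w u)
    (hpos : ∀ v : V, v ≠ 0 → 0 < g v v)
    (I J K : V ≃ₗ[ℝ] V)
    (hgI : ∀ u w : V, g (I u) (I w) = g u w)
    (hgJ : ∀ u w : V, g (J u) (J w) = g u w)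
    (hgK : ∀ u w : V, g (K u) (K w) = g u w)
    (hI2 : ∀ v : V, I (I v) = -v)
    (hJ2 : ∀ v : V, J (J v) = -v)
    (hK2 : ∀ v : V, K (K v) = -v)
    (hIJK : ∀ v : V, I (J v) = K v)
    (Jone Jzero : (V ≃ₗ[ℝ] V) → (V × Module.Dual ℝ V → V × Module.Dual ℝ V))
    (hJone : ∀ (A : V ≃ₗ[ℝ] V) (p : V × Module.Dual ℝ V),
      Jone A p = (-(A.trans g).symm p.2, (A.trans g) p.1))
    (hJzero : ∀ (A : V ≃ₗ[ℝ] V) (p : V × Module.Dual ℝ V),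
      Jzero A p = (A p.1, -(A.toLinearMap.dualMap p.2))) :
    (∀ p, Jzero I p = Jone J (Jone K p)) ∧
    (∀ p, Jzero J p = Jone K (Jone I p)) ∧
    (∀ p, Jzero K p = Jone I (Jone J p)) ∧
    (∀ p, Jzero I (Jzero I p) = -p) ∧
    (∀ p, Jzero J (Jzero J p) = -p) ∧
    (∀ p, Jzero K (Jzero K p) = -p) ∧
    (∀ p, Jzero I (Jzero J (Jzero K p)) = -p) := by
  -- pointwise quaternion identities
  have hJv : ∀ v : V, J v = -I (K v) := by
    intro v
    have h : I (I (J v)) = I (K v) := by rw [hIJK v]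
    rw [hI2] at h
    rw [← h, neg_neg]
  have hJK : ∀ v : V, J (K v) = I v := by
    intro v
    rw [hJv (K v), hK2, map_neg, neg_neg]
  have hJI : ∀ v : V, J (I v) = -K v := by
    intro v
    rw [show I v = J (K v) from (hJK v).symm, hJ2]
  have hKJ : ∀ v : V, K (J v) = -I v := by
    intro v
    rw [← hIJK (J v), hJ2, map_neg]
  have hIK : ∀ v : V, I (K v) = -J v := by
    intro v
    rw [← hIJK v, hI2]
  have hKI : ∀ v : V, K (I v) = J v := by
    intro v
    rw [← hIJK (I v), hJI, map_neg, hIK, neg_neg]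
  -- general composition lemma
  have key : ∀ (A B C : V ≃ₗ[ℝ] V), (∀ u w : V, g (A u) (A w) = g u w) →
      (∀ v : V, B (A v) = -(C v)) → (∀ w : V, C w = A (B w)) →
      ∀ p, Jzero A p = Jone B (Jone C p) := by
    intro A B C hgA hBA hCAB p
    obtain ⟨v, ξ⟩ := p
    rw [hJzero, hJone, hJone]
    dsimp only
    refine Prod.ext ?_ ?_
    · show A v = -(B.trans g).symm ((C.trans g) v)
      have h1 : (B.trans g).symm ((C.trans g) v) = -(A v) := by
        rw [LinearEquiv.symm_apply_eq]
        simp [LinearEquiv.trans_apply, hBA v]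
      rw [h1, neg_neg]
    · show -(A.toLinearMap.dualMap ξ) = (B.trans g) (-(C.trans g).symm ξ)
      set w := (C.trans g).symm ξ with hwdef
      have hw : g (C w) = ξ := by
        have := (C.trans g).apply_symm_apply ξ
        rwa [LinearEquiv.trans_apply] at this
      rw [map_neg, neg_inj]
      apply LinearMap.ext
      intro u
      have : (A.toLinearMap.dualMap ξ) u = ξ (A u) := rfl
      rw [this, ← hw]
      calc g (C w) (A u) = g (A u) (C w) := hsymm _ _
        _ = g (A u) (A (B w)) := by rw [hCAB w]
        _ = g u (B w) := hgA _ _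
        _ = g (B w) u := hsymm _ _
        _ = ((B.trans g) w) u := by rw [LinearEquiv.trans_apply]
  -- squares: general lemma
  have sq : ∀ (A : V ≃ₗ[ℝ] V), (∀ v : V, A (A v) = -v) →
      ∀ p, Jzero A (Jzero A p) = -p := by
    intro A hA2 p
    obtain ⟨v, ξ⟩ := p
    rw [hJzero, hJzero]
    dsimp only
    refine Prod.ext ?_ ?_
    · show A (A v) = -v
      exact hA2 v
    · show -(A.toLinearMap.dualMap (-(A.toLinearMap.dualMap ξ))) = -ξ
      rw [map_neg, neg_neg]
      apply LinearMap.ext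
      intro u
      show ξ (A (A u)) = -ξ u
      rw [hA2 u, map_neg]
  refine ⟨key I J K hgI hJI (fun w => (hIJK w).symm), key J K I hgJ hKJ (fun w => (hJK w).symm), key K I J hgK hIK (fun w => (hKI w).symm),
    sq I hI2, sq J hJ2, sq K hK2, ?_⟩
  intro p
  obtain ⟨v, ξ⟩ := p
  rw [hJzero, hJzero, hJzero]
  dsimp only
  refine Prod.ext ?_ ?_
  · show I (J (K v)) = -v
    rw [hJK, hI2]
  · show -(I.toLinearMap.dualMap (-(J.toLinearMap.dualMap (-(K.toLinearMap.dualMap ξ))))) = -ξ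
    simp only [map_neg, neg_neg, neg_inj]
    apply LinearMap.ext
    intro u
    show ξ (K (J (I u))) = ξ u
    rw [hJI, map_neg, hK2, neg_neg]
end

section
/- Let (V, g) be a finite-dimensional real inner product space and let I, J, K : V → V be linear isometries of g satisfying I∘I = J∘J = K∘K = −id and I∘J = K. With g̃(u) = g(u,·), ω̃_A = g̃ ∘ A, 𝒥_A¹(v,ξ) = (−ω̃_A⁻¹ ξ, ω̃_A v) and 𝒥_A⁰(v,ξ) = (A v, −A* ξ) as before, define G : V × V* → V × V* by G(v,ξ) = (g̃⁻¹ ξ, g̃ v). Then G ∘ G = id, G preserves the canonical quadratic form Q(v,ξ) = ξ(v), and for each A ∈ {I,J,K} one has 𝒥_A⁰ ∘ 𝒥_A¹ = 𝒥_A¹ ∘ 𝒥_A⁰ = −G. -/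
/-- for a hyperKähler structure `(g, I, J, K)` on a finite-dimensional real
inner product space `V`, the generalized metric `G(v,ξ) = (g̃⁻¹ξ, g̃ v)` on `V ⊕ V*`
satisfies `G² = id`, preserves `Q(v,ξ) = ξ(v)`, and for each `A ∈ {I,J,K}` one has
`𝒥_A⁰ ∘ 𝒥_A¹ = 𝒥_A¹ ∘ 𝒥_A⁰ = −G`. -/
theorem generalized_hyperKahler_metric (V : Type*) [AddCommGroup V] [Module ℝ V]
    [FiniteDimensional ℝ V]
    (g : V ≃ₗ[ℝ] Module.Dual ℝ V)
    (hsymm : ∀ u w : V, g u w = g w u)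
    (hpos : ∀ v : V, v ≠ 0 → 0 < g v v)
    (I J K : V ≃ₗ[ℝ] V)
    (hgI : ∀ u w : V, g (I u) (I w) = g u w)
    (hgJ : ∀ u w : V, g (J u) (J w) = g u w)
    (hgK : ∀ u w : V, g (K u) (K w) = g u w)
    (hI2 : ∀ v : V, I (I v) = -v)
    (hJ2 : ∀ v : V, J (J v) = -v)
    (hK2 : ∀ v : V, K (K v) = -v)
    (hIJK : ∀ v : V, I (J v) = K v)
    (Q : V × Module.Dual ℝ V → ℝ)
    (hQ : ∀ p : V × Module.Dual ℝ V, Q p = p.2 p.1)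
    (Jone Jzero : (V ≃ₗ[ℝ] V) → (V × Module.Dual ℝ V → V × Module.Dual ℝ V))
    (hJone : ∀ (A : V ≃ₗ[ℝ] V) (p : V × Module.Dual ℝ V),
      Jone A p = (-(A.trans g).symm p.2, (A.trans g) p.1))
    (hJzero : ∀ (A : V ≃ₗ[ℝ] V) (p : V × Module.Dual ℝ V),
      Jzero A p = (A p.1, -(A.toLinearMap.dualMap p.2)))
    (G : V × Module.Dual ℝ V → V × Module.Dual ℝ V)
    (hG : ∀ p : V × Module.Dual ℝ V, G p = (g.symm p.2, g p.1)) :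
    (∀ p, G (G p) = p) ∧
    (∀ p, Q (G p) = Q p) ∧
    (∀ p, Jzero I (Jone I p) = -(G p)) ∧ (∀ p, Jone I (Jzero I p) = -(G p)) ∧
    (∀ p, Jzero J (Jone J p) = -(G p)) ∧ (∀ p, Jone J (Jzero J p) = -(G p)) ∧
    (∀ p, Jzero K (Jone K p) = -(G p)) ∧ (∀ p, Jone K (Jzero K p) = -(G p)) := by
  have key : ∀ A : V ≃ₗ[ℝ] V, (∀ u w : V, g (A u) (A w) = g u w) →
      (∀ v : V, A (A v) = -v) →
      (∀ p, Jzero A (Jone A p) = -(G p)) ∧ (∀ p, Jone A (Jzero A p) = -(G p)) := by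
    intro A hgA hA2
    -- F1 : A ((A.trans g).symm ξ) = g.symm ξ
    have F1 : ∀ ξ : Module.Dual ℝ V, A ((A.trans g).symm ξ) = g.symm ξ := by
      intro ξ
      apply g.injective
      have : g (A ((A.trans g).symm ξ)) = (A.trans g) ((A.trans g).symm ξ) := rfl
      rw [this, LinearEquiv.apply_symm_apply, LinearEquiv.apply_symm_apply]
    -- F2 : A* (g (A v)) = g v
    have F2 : ∀ v : V, A.toLinearMap.dualMap (g (A v)) = g v := by
      intro v
      ext u
      exact hgA v u
    -- F3 : (A.trans g).symm (A* ξ) = -(g.symm ξ)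
    have F3 : ∀ ξ : Module.Dual ℝ V,
        (A.trans g).symm (A.toLinearMap.dualMap ξ) = -(g.symm ξ) := by
      intro ξ
      apply (A.trans g).injective
      rw [LinearEquiv.apply_symm_apply]
      have : (A.trans g) (-(g.symm ξ)) = -(g (A (g.symm ξ))) := by
        simp [LinearEquiv.trans_apply]
      rw [this]
      ext u
      have hu : u = A (-(A u)) := by rw [map_neg, hA2, neg_neg]
      have h1 : g (A (g.symm ξ)) u = -(ξ (A u)) := by
        conv_lhs => rw [hu]
        rw [hgA]
        simp
      simp only [LinearMap.dualMap_apply, LinearMap.neg_apply, h1, neg_neg]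
      rfl
    constructor
    · intro p
      rw [hJone, hJzero, hG]
      have h1 : A (-(A.trans g).symm p.2) = -(g.symm p.2) := by
        rw [map_neg, F1]
      have h2 : A.toLinearMap.dualMap ((A.trans g) p.1) = g p.1 := F2 p.1
      rw [h1, h2]
      rfl
    · intro p
      rw [hJzero, hJone, hG]
      have h1 : -(A.trans g).symm (-(A.toLinearMap.dualMap p.2)) = -(g.symm p.2) := by
        rw [map_neg, F3, neg_neg]
      have h2 : (A.trans g) (A p.1) = -(g p.1) := by
        have : (A.trans g) (A p.1) = g (A (A p.1)) := rfl
        rw [this, hA2, map_neg]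
      rw [h1, h2]
      rfl
  obtain ⟨hI1, hI2'⟩ := key I hgI hI2
  obtain ⟨hJ1, hJ2'⟩ := key J hgJ hJ2
  obtain ⟨hK1, hK2'⟩ := key K hgK hK2
  refine ⟨?_, ?_, hI1, hI2', hJ1, hJ2', hK1, hK2'⟩
  · intro p
    rw [hG, hG]
    simp
  · intro p
    rw [hQ, hQ, hG]
    simp only
    rw [hsymm]
    simp
end
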